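/- Let A₁, …, A_C be real matrices each with d rows whose column spaces are pairwise orthogonal, i.e., A_iᵀ A_j = 0 for all i ≠ j. Then the nuclear norm of their column-wise concatenation equals the sum of their nuclear norms: ‖[A₁, …, A_C]‖_* = ∑_{c=1}^{C} ‖A_c‖_*. -/

import Mathlib

/-!
Orthogonality of the column spaces makes the Gram matrix of `[A₁, …, A_C]` block diagonal with
blocks `A_cᵀ A_c`. The squared singular values are the roots of the characteristic polynomial of
the Gram matrix, and that polynomial is the product of those of the blocks, so the singular
values of the concatenation are, with multiplicity, those of the `A_c` taken together.
-/

open Matrix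

/-- The nuclear norm of a real matrix: the sum of its singular values,
i.e. the square roots of the eigenvalues of `Mᴴ * M`. -/
noncomputable def nuclearNorm {m n : Type*} [Fintype m] [Fintype n] [DecidableEq n]
    (M : Matrix m n ℝ) : ℝ :=
  ∑ i, Real.sqrt ((Matrix.isHermitian_conjTranspose_mul_self M).eigenvalues i)

/-- Column-wise concatenation of a family of matrices `A c : Matrix (Fin d) (Fin (n c)) ℝ`,
indexed by the sigma type of the column indices. -/
def concatColumns {d C : ℕ} {n : Fin C → ℕ}
    (A : ∀ c, Matrix (Fin d) (Fin (n c)) ℝ) :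
    Matrix (Fin d) ((c : Fin C) × Fin (n c)) ℝ :=
  Matrix.of fun i p => A p.1 i p.2

open Polynomial

namespace Matrix

theorem toSquareBlock_blockDiagonal' {α o : Type*} {m : o → Type*} [Zero α] [DecidableEq o]
    (M : ∀ i, Matrix (m i) (m i) α) (i : o) :
    (blockDiagonal' M).toSquareBlock Sigma.fst i =
      reindex (Equiv.sigmaSubtype i).symm (Equiv.sigmaSubtype i).symm (M i) := by
  ext ⟨⟨_, x⟩, rfl⟩ ⟨⟨_, y⟩, hy⟩
  cases hy
  simp [toSquareBlock_def, blockDiagonal'_apply_eq]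

variable {R o : Type*} [CommRing R] [Fintype o] [DecidableEq o]
  {m : o → Type*} [∀ i, Fintype (m i)] [∀ i, DecidableEq (m i)]

theorem charpoly_blockDiagonal' (M : ∀ i, Matrix (m i) (m i) R) :
    (blockDiagonal' M).charpoly = ∏ i, (M i).charpoly := by
  -- a block diagonal matrix is block triangular for any order on the blocks
  let _ : LinearOrder o := LinearOrder.lift' _ (Fintype.equivFin o).injective
  rw [charpoly, (blockTriangular_blockDiagonal' M).charmatrix.det_fintype]
  refine Finset.prod_congr rfl fun i _ => ?_
  rw [← charmatrix_toSquareBlock, ← charpoly, toSquareBlock_blockDiagonal', charpoly_reindex]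

theorem roots_charpoly_blockDiagonal' [IsDomain R] (M : ∀ i, Matrix (m i) (m i) R) :
    (blockDiagonal' M).charpoly.roots = ∑ i, (M i).charpoly.roots := by
  rw [charpoly_blockDiagonal' M,
    roots_prod _ _ (Finset.prod_ne_zero_iff.2 fun i _ => (charpoly_monic _).ne_zero)]
  rfl

end Matrix

theorem nuclearNorm_eq_sum_sqrt_roots_charpoly {m n : Type*} [Fintype m] [Fintype n]
    [DecidableEq n] (M : Matrix m n ℝ) :
    nuclearNorm M = ((Mᵀ * M).charpoly.roots.map Real.sqrt).sum := by
  rw [nuclearNorm, ← conjTranspose_eq_transpose_of_trivial,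
    (isHermitian_conjTranspose_mul_self M).roots_charpoly_eq_eigenvalues]
  simp

theorem transpose_concatColumns_mul_concatColumns_apply {d C : ℕ} {n : Fin C → ℕ}
    (A B : ∀ c, Matrix (Fin d) (Fin (n c)) ℝ) (p q : (c : Fin C) × Fin (n c)) :
    ((concatColumns A)ᵀ * concatColumns B) p q = ((A p.1)ᵀ * B q.1) p.2 q.2 := by
  simp [mul_apply, concatColumns]

theorem transpose_concatColumns_mul_self_eq_blockDiagonal' {d C : ℕ} {n : Fin C → ℕ}
    (A : ∀ c, Matrix (Fin d) (Fin (n c)) ℝ) (h : ∀ i j, i ≠ j → (A i)ᵀ * (A j) = 0) :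
    (concatColumns A)ᵀ * concatColumns A = blockDiagonal' fun c => (A c)ᵀ * A c := by
  ext ⟨i, x⟩ ⟨j, y⟩
  rw [transpose_concatColumns_mul_concatColumns_apply]
  obtain rfl | hij := eq_or_ne i j
  · rw [blockDiagonal'_apply_eq]
  · rw [blockDiagonal'_apply_ne _ _ _ hij, h i j hij, Matrix.zero_apply]

/-- If the column spaces of `A₁, …, A_C` are pairwise orthogonal
(`A_iᵀ A_j = 0` for `i ≠ j`), then the nuclear norm of their column-wise
concatenation equals the sum of their nuclear norms. -/
theorem nuclearNorm_concatColumns_eq_of_orthogonal {d C : ℕ} {n : Fin C → ℕ}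
    (A : ∀ c, Matrix (Fin d) (Fin (n c)) ℝ)
    (h : ∀ i j, i ≠ j → (A i)ᵀ * (A j) = 0) :
    nuclearNorm (concatColumns A) = ∑ c, nuclearNorm (A c) := by
  calc nuclearNorm (concatColumns A)
      = ((∑ c, ((A c)ᵀ * A c).charpoly.roots).map Real.sqrt).sum := by
        rw [nuclearNorm_eq_sum_sqrt_roots_charpoly,
          transpose_concatColumns_mul_self_eq_blockDiagonal' A h, roots_charpoly_blockDiagonal']
    _ = ∑ c, (((A c)ᵀ * A c).charpoly.roots.map Real.sqrt).sum := by
        rw [← Multiset.coe_mapAddMonoidHom, map_sum, Multiset.sum_sum]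
    _ = ∑ c, nuclearNorm (A c) := by
        simp only [nuclearNorm_eq_sum_sqrt_roots_charpoly]
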